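/- arXiv:1606.09193 — 5 statements merged into one kernel-verified Lean document; each statement's English description precedes it below -/
import Mathlib

section
/- Let X ∈ ℝ^{n×p}, let T₀ ⊆ {1,…,p} with |T₀| ≤ s₀, and suppose that for some constant C with 0 < C < 1, every h ∈ ker X satisfies ‖h_{T₀}‖₂ ≤ C·‖h_{T₀ᶜ}‖₁/√s₀. Let β ∈ ℝ^p be supported on T₀ (i.e., β_j = 0 for all j ∉ T₀), set y = Xβ, and let β̂ be any minimizer of ‖b‖₁ over {b ∈ ℝ^p : Xb = y}. Then β̂ = β. -/
/-!
Write `h = β̂ - β ∈ ker X`. Minimality of `β̂` against the feasible point `β`, which vanishes off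
`T₀`, gives the cone condition `‖h_{T₀ᶜ}‖₁ ≤ ‖h_{T₀}‖₁`. Cauchy–Schwarz and the null space property
then give `‖h_{T₀ᶜ}‖₁ ≤ ‖h_{T₀}‖₁ ≤ √s₀ ‖h_{T₀}‖₂ ≤ C ‖h_{T₀ᶜ}‖₁`, so `h_{T₀ᶜ} = 0` as `C < 1`,
and then `h_{T₀} = 0` by the null space property once more.
-/

open Matrix Finset

variable {ι : Type*} [Fintype ι] [DecidableEq ι]

lemma sum_abs_le_sqrt_card_mul_sqrt_sum_sq {α : Type*} (T : Finset α) (h : α → ℝ) :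
    ∑ j ∈ T, |h j| ≤ √(#T : ℝ) * √(∑ j ∈ T, h j ^ 2) := by
  simpa using Real.sum_mul_le_sqrt_mul_sqrt T (fun _ ↦ 1) (fun j ↦ |h j|)

lemma sum_compl_abs_sub_le_sum_abs_sub (T : Finset ι) {β b : ι → ℝ} (hβ : ∀ j, j ∉ T → β j = 0)
    (hb : ∑ j, |b j| ≤ ∑ j, |β j|) :
    ∑ j ∈ Tᶜ, |b j - β j| ≤ ∑ j ∈ T, |b j - β j| := by
  have hβTc : ∑ j ∈ Tᶜ, |β j| = 0 := sum_eq_zero fun j hj ↦ by simp [hβ j (mem_compl.mp hj)]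
  have hcompl : ∑ j ∈ Tᶜ, |b j - β j| = ∑ j ∈ Tᶜ, |b j| :=
    sum_congr rfl fun j hj ↦ by rw [hβ j (mem_compl.mp hj), sub_zero]
  have hT : ∑ j ∈ T, |β j| ≤ ∑ j ∈ T, |b j| + ∑ j ∈ T, |b j - β j| := by
    rw [← sum_add_distrib]
    exact sum_le_sum fun j _ ↦ by simpa using abs_sub (b j) (b j - β j)
  rw [← sum_add_sum_compl T, ← sum_add_sum_compl T (fun j ↦ |β j|), hβTc] at hb
  linarith

lemma eq_zero_of_sum_compl_abs_le (T : Finset ι) {s₀ : ℕ} (hT : #T ≤ s₀) {C : ℝ} (hC : C < 1)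
    {h : ι → ℝ} (hnsp : √(∑ j ∈ T, h j ^ 2) ≤ C * (∑ j ∈ Tᶜ, |h j|) / √s₀)
    (hcone : ∑ j ∈ Tᶜ, |h j| ≤ ∑ j ∈ T, |h j|) :
    h = 0 := by
  set A := ∑ j ∈ Tᶜ, |h j|
  have hA_nonneg : 0 ≤ A := sum_nonneg fun j _ ↦ abs_nonneg (h j)
  have hA : A = 0 := by
    have hchain : A ≤ √s₀ * (C * A / √s₀) :=
      calc A ≤ ∑ j ∈ T, |h j| := hcone
        _ ≤ √(#T : ℝ) * √(∑ j ∈ T, h j ^ 2) := sum_abs_le_sqrt_card_mul_sqrt_sum_sq T h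
        _ ≤ √s₀ * (C * A / √s₀) := by gcongr
    -- `√s₀ * (C * A / √s₀)` is `C * A`, or `0` when `s₀ = 0`
    rcases eq_or_ne (√(s₀ : ℝ)) 0 with hs | hs
    · rw [hs, zero_mul] at hchain
      linarith
    · rw [mul_div_cancel₀ _ hs] at hchain
      nlinarith
  have hsq : ∑ j ∈ T, h j ^ 2 = 0 := by
    rw [hA, mul_zero, zero_div] at hnsp
    exact le_antisymm (Real.sqrt_eq_zero'.mp (le_antisymm hnsp (Real.sqrt_nonneg _)))
      (sum_nonneg fun j _ ↦ sq_nonneg (h j))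
  funext j
  by_cases hj : j ∈ T
  · exact pow_eq_zero_iff two_ne_zero |>.mp
      ((sum_eq_zero_iff_of_nonneg fun j _ ↦ sq_nonneg (h j)).mp hsq j hj)
  · exact abs_eq_zero.mp
      ((sum_eq_zero_iff_of_nonneg fun j _ ↦ abs_nonneg (h j)).mp hA j (mem_compl.mpr hj))

theorem nsp_implies_exact_recovery_general
    {n p : ℕ} (X : Matrix (Fin n) (Fin p) ℝ) (s₀ : ℕ) (T₀ : Finset (Fin p))
    (hT₀ : T₀.card ≤ s₀)
    (C : ℝ) (hC1 : C < 1)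
    (hNSP : ∀ h : Fin p → ℝ, X.mulVec h = 0 →
      Real.sqrt (∑ j ∈ T₀, h j ^ 2) ≤ C * (∑ j ∈ T₀ᶜ, |h j|) / Real.sqrt s₀)
    (β : Fin p → ℝ) (hβ : ∀ j, j ∉ T₀ → β j = 0)
    (βhat : Fin p → ℝ)
    (hfeas : X.mulVec βhat = X.mulVec β)
    (hmin : ∀ b : Fin p → ℝ, X.mulVec b = X.mulVec β → ∑ j, |βhat j| ≤ ∑ j, |b j|) :
    βhat = β := by
  have hker : X.mulVec (βhat - β) = 0 := by rw [mulVec_sub, hfeas, sub_self]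
  have hcone := sum_compl_abs_sub_le_sum_abs_sub T₀ hβ (hmin β rfl)
  exact sub_eq_zero.mp (eq_zero_of_sum_compl_abs_le T₀ hT₀ hC1 (hNSP _ hker) hcone)

/-- **The Null Space Property implies exact recovery by Basis Pursuit.**
If every `h ∈ ker X` satisfies `‖h_{T₀}‖₂ ≤ C ‖h_{T₀ᶜ}‖₁/√s₀` with `0 < C < 1`,
`β` is supported on `T₀` with `|T₀| ≤ s₀`, `y = Xβ`, and `β̂` minimizes the `ℓ1` norm
among all solutions of `Xb = y`, then `β̂ = β`. -/
theorem nsp_implies_exact_recovery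
    {n p : ℕ} (X : Matrix (Fin n) (Fin p) ℝ) (s₀ : ℕ) (T₀ : Finset (Fin p))
    (hT₀ : T₀.card ≤ s₀)
    (C : ℝ) (hC0 : 0 < C) (hC1 : C < 1)
    (hNSP : ∀ h : Fin p → ℝ, X.mulVec h = 0 →
      Real.sqrt (∑ j ∈ T₀, h j ^ 2) ≤ C * (∑ j ∈ T₀ᶜ, |h j|) / Real.sqrt s₀)
    (β : Fin p → ℝ) (hβ : ∀ j, j ∉ T₀ → β j = 0)
    (βhat : Fin p → ℝ)
    (hfeas : X.mulVec βhat = X.mulVec β)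
    (hmin : ∀ b : Fin p → ℝ, X.mulVec b = X.mulVec β → ∑ j, |βhat j| ≤ ∑ j, |b j|) :
    βhat = β :=
  nsp_implies_exact_recovery_general X s₀ T₀ hT₀ C hC1 hNSP β hβ βhat hfeas hmin
end

section
/- Let X ∈ ℝ^{n×p} have ℓ2-normalized columns and coherence μ. Let T₀ ⊆ {1,…,p} with |T₀| = s₀ and let λ₁ be the largest eigenvalue of X_{T₀}X_{T₀}ᵗ. Let λ̃₁ be any number with λ̃₁ ≥ λ₁ and λ̃₁ > 1, and let j ∉ T₀. Then the largest eigenvalue of X_{T₀}X_{T₀}ᵗ + X_jX_jᵗ satisfies λ₁(X_{T₀}X_{T₀}ᵗ + X_jX_jᵗ) ≤ λ̃₁ + ε_{s₀,max}, where ε_{s₀,max} = (1/2)·( (s₀³·μ²·‖X_{T₀}‖² + 4·s₀^{3/2}·μ·‖X_{T₀}‖·λ̃₁) / (2·(λ̃₁ − 1)) ). -/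
/-!
Write `A = X_{T₀} X_{T₀}ᵗ`, `v = X_j`, and let `u` be an eigenvector of `A + v vᵗ` for an
eigenvalue `r > λ̃₁`. In an eigenbasis of `A` (eigenvalues `0 ≤ aᵢ ≤ λ₁`) the coordinates `wᵢ` of
`u` and `bᵢ` of `v` satisfy `(r - aᵢ) wᵢ = t bᵢ` with `t = ⟨v, u⟩ ≠ 0`, while
`⟨v, A u⟩ = t (r - 1)`. Hence
`t² vᵗAv = ∑ aᵢ (r - aᵢ)² wᵢ² ≥ (r - λ₁) ∑ aᵢ (r - aᵢ) wᵢ² = (r - λ₁) (r - 1) t²`,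
so `(r - 1)(r - λ̃₁) ≤ vᵗAv` and `r ≤ λ̃₁ + vᵗAv / (λ̃₁ - 1)`. Finally
`vᵗAv = ∑_{τ ∈ T₀} ⟨X_τ, X_j⟩² ≤ s₀ μ`, since each inner product is bounded by `μ` and, by
Cauchy–Schwarz, by `1`; and `s₀ μ / (λ̃₁ - 1) ≤ ε_{s₀,max}` because `‖X_{T₀}‖ ≥ 1`.
-/

open Matrix

/-- The `ℓ2 → ℓ2` operator norm of a matrix. -/
noncomputable def opNorm {m n : Type*} [Fintype m] [Fintype n] [DecidableEq n]
    (A : Matrix m n ℝ) : ℝ :=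
  ‖LinearMap.toContinuousLinearMap (Matrix.toEuclideanLin A)‖

/-- The submatrix of `X` made of the columns indexed by `T`. -/
noncomputable def subCols {n p : ℕ} (X : Matrix (Fin n) (Fin p) ℝ) (T : Finset (Fin p)) :
    Matrix (Fin n) {j // j ∈ T} ℝ :=
  X.submatrix id (fun t => (t : Fin p))

theorem vecMulVec_isHermitian {n : ℕ} (v : Fin n → ℝ) : (Matrix.vecMulVec v v).IsHermitian := by
  ext i j
  simp [Matrix.vecMulVec, Matrix.conjTranspose_apply, mul_comm]

/-- `X_{T₀}X_{T₀}ᵗ + vvᵗ` is Hermitian. -/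
theorem pertM_isHermitian {n p : ℕ} (X : Matrix (Fin n) (Fin p) ℝ) (T₀ : Finset (Fin p))
    (v : Fin n → ℝ) :
    (subCols X T₀ * (subCols X T₀)ᴴ + Matrix.vecMulVec v v).IsHermitian :=
  (Matrix.isHermitian_mul_conjTranspose_self _).add (vecMulVec_isHermitian v)

/-- The `k`-th largest eigenvalue (`k` counted from 1) of a Hermitian real matrix. -/
noncomputable def kthLargestEig {ι : Type*} [Fintype ι] [DecidableEq ι]
    {M : Matrix ι ι ℝ} (hM : M.IsHermitian) (k : ℕ) : ℝ :=
  ((Finset.univ.val.map hM.eigenvalues).sort (· ≤ ·)).getD (Fintype.card ι - k) 0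

theorem OrthonormalBasis.sum_dotProduct_mul_dotProduct {ι κ : Type*} [Fintype ι] [Fintype κ]
    (b : OrthonormalBasis κ ℝ (EuclideanSpace ℝ ι)) (x y : ι → ℝ) :
    ∑ k, ((b k).ofLp ⬝ᵥ x) * ((b k).ofLp ⬝ᵥ y) = x ⬝ᵥ y := by
  have h := b.sum_inner_mul_inner (WithLp.toLp 2 x) (WithLp.toLp 2 y)
  simp only [EuclideanSpace.inner_eq_star_dotProduct, star_trivial] at h
  simpa only [dotProduct_comm y] using h

namespace Matrix.IsHermitian

variable {ι : Type*} [Fintype ι] [DecidableEq ι] {A : Matrix ι ι ℝ} (hA : A.IsHermitian)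
include hA

theorem eigenvectorBasis_dotProduct_mulVec (i : ι) (x : ι → ℝ) :
    (hA.eigenvectorBasis i).ofLp ⬝ᵥ (A *ᵥ x) =
      hA.eigenvalues i * ((hA.eigenvectorBasis i).ofLp ⬝ᵥ x) := by
  rw [dotProduct_mulVec, ← mulVec_transpose, ← conjTranspose_eq_transpose_of_trivial, hA.eq,
    hA.mulVec_eigenvectorBasis, smul_dotProduct, smul_eq_mul]

theorem dotProduct_mulVec_eq_sum (x y : ι → ℝ) :
    x ⬝ᵥ (A *ᵥ y) = ∑ i, hA.eigenvalues i * ((hA.eigenvectorBasis i).ofLp ⬝ᵥ x) *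
      ((hA.eigenvectorBasis i).ofLp ⬝ᵥ y) := by
  rw [← hA.eigenvectorBasis.sum_dotProduct_mul_dotProduct]
  refine Finset.sum_congr rfl fun i _ => ?_
  rw [hA.eigenvectorBasis_dotProduct_mulVec]
  ring

theorem sub_one_mul_sub_le_of_add_vecMulVec_mulVec_eq (hA0 : ∀ i, 0 ≤ hA.eigenvalues i) {c : ℝ}
    (hAc : ∀ i, hA.eigenvalues i ≤ c) {v u : ι → ℝ} (hv : v ⬝ᵥ v = 1) (hu : u ≠ 0) {r : ℝ}
    (hcr : c < r) (hMu : (A + vecMulVec v v) *ᵥ u = r • u) :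
    (r - 1) * (r - c) ≤ v ⬝ᵥ (A *ᵥ v) := by
  set a := hA.eigenvalues
  set b := fun i => (hA.eigenvectorBasis i).ofLp ⬝ᵥ v
  set w := fun i => (hA.eigenvectorBasis i).ofLp ⬝ᵥ u
  set t := v ⬝ᵥ u
  have hAu : A *ᵥ u = r • u - t • v := by
    rw [← hMu, add_mulVec, vecMulVec_mulVec, op_smul_eq_smul]
    abel
  have hcoord : ∀ i, (r - a i) * w i = t * b i := by
    intro i
    have h := hA.eigenvectorBasis_dotProduct_mulVec i u
    rw [hAu, dotProduct_sub, dotProduct_smul, dotProduct_smul, smul_eq_mul, smul_eq_mul] at h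
    change r * w i - t * b i = a i * w i at h
    linear_combination h
  have ht : t ≠ 0 := by
    intro ht
    have hw : ∀ i, w i = 0 := fun i =>
      (mul_eq_zero.mp ((hcoord i).trans (by rw [ht, zero_mul]))).resolve_left
        (sub_ne_zero.mpr ((hAc i).trans_lt hcr).ne')
    apply hu
    rw [← dotProduct_self_eq_zero, ← hA.eigenvectorBasis.sum_dotProduct_mul_dotProduct]
    exact Finset.sum_eq_zero fun i _ => mul_eq_zero_of_left (hw i) _
  have hvAu : v ⬝ᵥ (A *ᵥ u) = t * (r - 1) := by
    rw [hAu, dotProduct_sub, dotProduct_smul, dotProduct_smul, hv, smul_eq_mul, smul_eq_mul]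
    ring
  have hmul : t ^ 2 * ((r - 1) * (r - c)) ≤ t ^ 2 * v ⬝ᵥ (A *ᵥ v) := calc
    t ^ 2 * ((r - 1) * (r - c)) = (r - c) * (t * ∑ i, a i * b i * w i) := by
      rw [← hA.dotProduct_mulVec_eq_sum, hvAu]; ring
    _ = ∑ i, (r - c) * (a i * w i * (t * b i)) := by
      rw [Finset.mul_sum, Finset.mul_sum]
      exact Finset.sum_congr rfl fun i _ => by ring
    _ ≤ ∑ i, a i * (t * b i) ^ 2 := by
      refine Finset.sum_le_sum fun i _ => ?_
      rw [← hcoord]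
      have hterm := mul_nonneg (mul_nonneg (mul_nonneg (hA0 i) (sq_nonneg (w i)))
        (sub_nonneg.mpr ((hAc i).trans hcr.le))) (sub_nonneg.mpr (hAc i))
      linear_combination hterm
    _ = t ^ 2 * v ⬝ᵥ (A *ᵥ v) := by
      rw [hA.dotProduct_mulVec_eq_sum, Finset.mul_sum]
      exact Finset.sum_congr rfl fun i _ => by ring
  exact le_of_mul_le_mul_left hmul (sq_pos_of_ne_zero ht)

theorem eigenvalues_add_vecMulVec_le (hA0 : ∀ i, 0 ≤ hA.eigenvalues i) {c : ℝ}
    (hAc : ∀ i, hA.eigenvalues i ≤ c) (hc : 1 < c) {v : ι → ℝ} (hv : v ⬝ᵥ v = 1)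
    (hM : (A + vecMulVec v v).IsHermitian) (i : ι) :
    hM.eigenvalues i ≤ c + v ⬝ᵥ (A *ᵥ v) / (c - 1) := by
  have hδ : 0 ≤ v ⬝ᵥ (A *ᵥ v) := by
    rw [hA.dotProduct_mulVec_eq_sum]
    exact Finset.sum_nonneg fun k _ => by
      rw [mul_assoc, ← sq]
      exact mul_nonneg (hA0 k) (sq_nonneg _)
  rcases le_or_gt (hM.eigenvalues i) c with hle | hgt
  · linarith [div_nonneg hδ (sub_pos.mpr hc).le]
  have hu : (hM.eigenvectorBasis i).ofLp ≠ 0 := by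
    simpa using hM.eigenvectorBasis.orthonormal.ne_zero i
  have h := hA.sub_one_mul_sub_le_of_add_vecMulVec_mulVec_eq hA0 hAc hv hu hgt
    (hM.mulVec_eigenvectorBasis i)
  rw [← sub_le_iff_le_add', le_div_iff₀ (sub_pos.mpr hc)]
  nlinarith

end Matrix.IsHermitian

/-- `hc` accounts for the default value `0` of `kthLargestEig` at an out-of-range index. -/
theorem kthLargestEig_le {ι : Type*} [Fintype ι] [DecidableEq ι] {M : Matrix ι ι ℝ}
    (hM : M.IsHermitian) {c : ℝ} (hc : 0 ≤ c) (h : ∀ i, hM.eigenvalues i ≤ c) (k : ℕ) :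
    kthLargestEig hM k ≤ c := by
  unfold kthLargestEig
  rw [List.getD_eq_getElem?_getD]
  rcases hx : ((Finset.univ.val.map hM.eigenvalues).sort (· ≤ ·))[Fintype.card ι - k]?
    with _ | x
  · simpa using hc
  · obtain ⟨i, -, rfl⟩ := Multiset.mem_map.mp ((Multiset.mem_sort _).mp (List.mem_of_getElem? hx))
    simpa using h i

theorem dotProduct_mul_conjTranspose_mulVec {ι κ : Type*} [Fintype ι] [Fintype κ]
    (B : Matrix ι κ ℝ) (v : ι → ℝ) :
    v ⬝ᵥ ((B * Bᴴ) *ᵥ v) = (Bᴴ *ᵥ v) ⬝ᵥ (Bᴴ *ᵥ v) := by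
  rw [← mulVec_mulVec, dotProduct_mulVec, ← mulVec_transpose,
    conjTranspose_eq_transpose_of_trivial]

theorem sq_sum_mul_le_of_coherence {n p : ℕ} {X : Matrix (Fin n) (Fin p) ℝ} {μ : ℝ}
    (hcols : ∀ j, ∑ i, (X i j) ^ 2 = 1) (hcoh : ∀ k l, k ≠ l → |∑ i, X i k * X i l| ≤ μ)
    {k l : Fin p} (hkl : k ≠ l) : (∑ i, X i k * X i l) ^ 2 ≤ μ := by
  have hCS := Finset.sum_mul_sq_le_sq_mul_sq Finset.univ (fun i => X i k) (fun i => X i l)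
  rw [hcols, hcols, mul_one, sq_le_one_iff_abs_le_one] at hCS
  calc (∑ i, X i k * X i l) ^ 2 = |∑ i, X i k * X i l| * |∑ i, X i k * X i l| := by
        rw [abs_mul_abs_self, sq]
    _ ≤ μ * 1 := mul_le_mul (hcoh k l hkl) hCS (abs_nonneg _) ((abs_nonneg _).trans (hcoh k l hkl))
    _ = μ := mul_one μ

theorem dotProduct_subCols_mulVec_le {n p : ℕ} {X : Matrix (Fin n) (Fin p) ℝ} {μ : ℝ}
    (hcols : ∀ j, ∑ i, (X i j) ^ 2 = 1) (hcoh : ∀ k l, k ≠ l → |∑ i, X i k * X i l| ≤ μ)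
    {T : Finset (Fin p)} {j : Fin p} (hj : j ∉ T) :
    (fun i => X i j) ⬝ᵥ ((subCols X T * (subCols X T)ᴴ) *ᵥ fun i => X i j) ≤ T.card * μ := by
  rw [dotProduct_mul_conjTranspose_mulVec]
  calc _ = ∑ τ : T, (∑ i, X i τ * X i j) ^ 2 := by simp [dotProduct, mulVec, subCols, sq]
    _ ≤ ∑ _τ : T, μ := Finset.sum_le_sum fun τ _ =>
      sq_sum_mul_le_of_coherence hcols hcoh (ne_of_mem_of_not_mem τ.2 hj)
    _ = T.card * μ := by simp

theorem sqrt_sum_sq_le_opNorm {m n : Type*} [Fintype m] [Fintype n] [DecidableEq n]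
    (B : Matrix m n ℝ) (k : n) : √(∑ i, B i k ^ 2) ≤ opNorm B := by
  set T := LinearMap.toContinuousLinearMap (toEuclideanLin B)
  have hcol : T (EuclideanSpace.single k 1) = WithLp.toLp 2 (fun i => B i k) := by
    ext i
    simp [T, toEuclideanLin, mulVec_single]
  calc √(∑ i, B i k ^ 2) = ‖T (EuclideanSpace.single k 1)‖ := by
        simp [hcol, EuclideanSpace.norm_eq]
    _ ≤ ‖T‖ * ‖EuclideanSpace.single k (1 : ℝ)‖ := T.le_opNorm _
    _ = opNorm B := by simp [T, opNorm]

theorem div_sub_one_le_epsilon {s μ N t : ℝ} (hs : 1 ≤ s) (hμ : 0 ≤ μ) (hN : 1 ≤ N)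
    (ht : 1 < t) :
    s * μ / (t - 1) ≤
      1 / 2 * ((s ^ 3 * μ ^ 2 * N ^ 2 + 4 * (s * √s) * μ * N * t) / (2 * (t - 1))) := by
  have hNt : 1 ≤ √s * N * t := calc
    1 ≤ √s * N := one_le_mul_of_one_le_of_one_le (Real.one_le_sqrt.mpr hs) hN
    _ ≤ √s * N * t := le_mul_of_one_le_right (by positivity) ht.le
  calc s * μ / (t - 1) = 4 * (s * μ) / (4 * (t - 1)) := (mul_div_mul_left _ _ four_ne_zero).symm
    _ ≤ (s ^ 3 * μ ^ 2 * N ^ 2 + 4 * (s * √s) * μ * N * t) / (4 * (t - 1)) := by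
      gcongr
      nlinarith [mul_le_mul_of_nonneg_left hNt (mul_nonneg (by linarith : 0 ≤ s) hμ),
        (by positivity : 0 ≤ s ^ 3 * μ ^ 2 * N ^ 2)]
    _ = _ := by field_simp; ring

theorem append_column_largest_eigenvalue_perturbation_general
    {n p : ℕ} (X : Matrix (Fin n) (Fin p) ℝ) (μ : ℝ) (s₀ : ℕ)
    (hcols : ∀ j, ∑ i, (X i j) ^ 2 = 1)
    (hcoh : ∀ k l, k ≠ l → |∑ i, X i k * X i l| ≤ μ)
    (T₀ : Finset (Fin p)) (hT₀ : T₀.card = s₀)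
    (j : Fin p) (hj : j ∉ T₀)
    (lam1 tlam1 : ℝ)
    (hlam1 : IsGreatest
      (Set.range (Matrix.isHermitian_mul_conjTranspose_self (subCols X T₀)).eigenvalues) lam1)
    (htge : lam1 ≤ tlam1) (htgt : 1 < tlam1)
    (ε : ℝ)
    (hε : ε = (1 / 2) * (((s₀ : ℝ) ^ 3 * μ ^ 2 * opNorm (subCols X T₀) ^ 2 +
        4 * ((s₀ : ℝ) * Real.sqrt s₀) * μ * opNorm (subCols X T₀) * tlam1) /
      (2 * (tlam1 - 1)))) :
    kthLargestEig (pertM_isHermitian X T₀ (fun i => X i j)) 1 ≤ tlam1 + ε := by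
  set B := subCols X T₀
  have hv : (fun i => X i j) ⬝ᵥ (fun i => X i j) = 1 := by simpa [dotProduct, sq] using hcols j
  have hδ := hT₀ ▸ dotProduct_subCols_mulVec_le hcols hcoh hj
  have hε' : 0 ≤ ε ∧ s₀ * μ / (tlam1 - 1) ≤ ε := by
    rcases T₀.eq_empty_or_nonempty with h | ⟨τ, hτ⟩
    · simp [hε, ← hT₀, h]
    · have hμ : 0 ≤ μ := (abs_nonneg _).trans (hcoh τ j (ne_of_mem_of_not_mem hτ hj))
      have hN : 1 ≤ opNorm B := by
        simpa [B, subCols, hcols] using sqrt_sum_sq_le_opNorm B ⟨τ, hτ⟩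
      have hs : 1 ≤ (s₀ : ℝ) := by rw [← hT₀]; exact_mod_cast Finset.card_pos.mpr ⟨τ, hτ⟩
      have h := hε ▸ div_sub_one_le_epsilon hs hμ hN htgt
      exact ⟨(div_nonneg (by positivity) (by linarith)).trans h, h⟩
  refine kthLargestEig_le _ (by linarith [hε'.1]) (fun i => ?_) 1
  calc _ ≤ tlam1 + _ / (tlam1 - 1) :=
        (isHermitian_mul_conjTranspose_self B).eigenvalues_add_vecMulVec_le
          (eigenvalues_self_mul_conjTranspose_nonneg B) (fun i => (hlam1.2 ⟨i, rfl⟩).trans htge)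
          htgt hv _ i
    _ ≤ tlam1 + s₀ * μ / (tlam1 - 1) := by gcongr
    _ ≤ tlam1 + ε := by linarith [hε'.2]

/-- **Appending one column: perturbation of the largest eigenvalue.**
If `λ₁` is the largest eigenvalue of `X_{T₀}X_{T₀}ᵗ`, `λ̃₁ ≥ λ₁`, `λ̃₁ > 1` and `j ∉ T₀`, then
`λ₁(X_{T₀}X_{T₀}ᵗ + X_jX_jᵗ) ≤ λ̃₁ + ε_{s₀,max}`. -/
theorem append_column_largest_eigenvalue_perturbation
    {n p : ℕ} (X : Matrix (Fin n) (Fin p) ℝ) (μ : ℝ) (s₀ : ℕ)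
    (hcols : ∀ j, ∑ i, (X i j) ^ 2 = 1)
    (hμ0 : 0 ≤ μ)
    (hcoh : ∀ k l, k ≠ l → |∑ i, X i k * X i l| ≤ μ)
    (T₀ : Finset (Fin p)) (hT₀ : T₀.card = s₀)
    (j : Fin p) (hj : j ∉ T₀)
    (lam1 tlam1 : ℝ)
    (hlam1 : IsGreatest
      (Set.range (Matrix.isHermitian_mul_conjTranspose_self (subCols X T₀)).eigenvalues) lam1)
    (htge : lam1 ≤ tlam1) (htgt : 1 < tlam1)
    (ε : ℝ)
    (hε : ε = (1 / 2) * (((s₀ : ℝ) ^ 3 * μ ^ 2 * opNorm (subCols X T₀) ^ 2 +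
        4 * ((s₀ : ℝ) * Real.sqrt s₀) * μ * opNorm (subCols X T₀) * tlam1) /
      (2 * (tlam1 - 1)))) :
    kthLargestEig (pertM_isHermitian X T₀ (fun i => X i j)) 1 ≤ tlam1 + ε :=
  append_column_largest_eigenvalue_perturbation_general X μ s₀ hcols hcoh T₀ hT₀ j hj lam1 tlam1
    hlam1 htge htgt ε hε
end

section
/- Let X ∈ ℝ^{n×p} have ℓ2-normalized columns and coherence μ. Let T₀ ⊆ {1,…,p} with |T₀| = s₀, let λ₁ ≥ ⋯ ≥ λ_{s₀} be the eigenvalues of X_{T₀}ᵗX_{T₀}, and let λ̃₁ ≥ λ₁ and 0 < λ̃_{s₀} ≤ λ_{s₀}. Let T₁ ⊆ {1,…,p} with |T₁| = s₁ and T₀ ∩ T₁ = ∅, and let η ∈ (0,1). Define ε_min = (1/4)·( (s₀³·μ²·η² + 4·s₀^{3/2}·μ·η²) / (1 − s₀·μ² − η) ) and ε_max = (1/4)·( ((s₀+s₁)³·μ²·(2−η)² + 4·(s₀+s₁)^{3/2}·μ·(2−η)²) / (λ̃₁ − 1) ). Assume: (1) 1 − (s₀+s₁)·μ > λ̃_{s₀}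 > η; (2) 1 < λ̃₁ < 2 − η; (3) s₁ < min( (λ̃_{s₀} − η)/ε_min , (2 − η − λ̃₁)/ε_max ). Then the smallest eigenvalue of X_{T₀∪T₁}ᵗX_{T₀∪T₁} satisfies λ_{s₀+s₁}(X_{T₀∪T₁}ᵗX_{T₀∪T₁}) ≥ λ̃_{s₀} − s₁·ε_min, and the largest eigenvalue satisfies λ₁(X_{T₀∪T₁}ᵗX_{T₀∪T₁}) ≤ λ̃₁ + s₁·ε_max. -/
open Matrix

/-- The Gram matrix `X_Tᵗ X_T`. -/
noncomputable def gram {n p : ℕ} (X : Matrix (Fin n) (Fin p) ℝ) (T : Finset (Fin p)) :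
    Matrix {j // j ∈ T} {j // j ∈ T} ℝ :=
  (subCols X T)ᴴ * subCols X T

theorem gram_isHermitian {n p : ℕ} (X : Matrix (Fin n) (Fin p) ℝ) (T : Finset (Fin p)) :
    (gram X T).IsHermitian :=
  Matrix.isHermitian_conjTranspose_mul_self _

/-!
Gershgorin's theorem does all the work. The Gram matrix `X_Tᵗ X_T` has unit diagonal and
off-diagonal entries bounded by `μ`, so its eigenvalues lie within `(|T| - 1) μ` of `1`. For
`T = T₀ ∪ T₁` assumption (1) puts this whole interval above `λ̃_{s₀}` (and (3) forces
`ε_min ≥ 0`), while for `s₁ ≥ 1` we have `ε_max ≥ (s₀ + s₁)^{3/2} μ ≥ (s₀ + s₁) μ` because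
`λ̃₁ - 1 < 1 - η < (2 - η)²`. When `s₁ = 0` the upper bound is the assumption on `T₀`.
-/

theorem gram_apply {n p : ℕ} (X : Matrix (Fin n) (Fin p) ℝ) (T : Finset (Fin p))
    (k l : {j // j ∈ T}) : _root_.gram X T k l = ∑ i, X i k * X i l := by
  simp [_root_.gram, subCols, mul_apply]

theorem Matrix.IsHermitian.hasEigenvalue_toLin'_eigenvalues {ι : Type*} [Fintype ι]
    [DecidableEq ι] {A : Matrix ι ι ℝ} (hA : A.IsHermitian) (i : ι) :
    Module.End.HasEigenvalue (toLin' A) (hA.eigenvalues i) :=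
  .of_mem_spectrum <| by rw [spectrum_toLin']; exact hA.eigenvalues_mem_spectrum_real i

theorem Matrix.IsHermitian.abs_eigenvalues_sub_le {ι : Type*} [Fintype ι] [DecidableEq ι]
    {A : Matrix ι ι ℝ} (hA : A.IsHermitian) {d μ : ℝ} (hdiag : ∀ k, A k k = d)
    (hoff : ∀ k l, k ≠ l → |A k l| ≤ μ) (i : ι) :
    |hA.eigenvalues i - d| ≤ ((Fintype.card ι : ℝ) - 1) * μ := by
  obtain ⟨k, hk⟩ := eigenvalue_mem_ball (hA.hasEigenvalue_toLin'_eigenvalues i)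
  rw [Metric.mem_closedBall, Real.dist_eq, hdiag] at hk
  have : Nonempty ι := ⟨k⟩
  calc |hA.eigenvalues i - d| ≤ ∑ l ∈ Finset.univ.erase k, ‖A k l‖ := hk
    _ ≤ ∑ _l ∈ Finset.univ.erase k, μ :=
        Finset.sum_le_sum fun l hl => hoff k l (Finset.ne_of_mem_erase hl).symm
    _ = ((Fintype.card ι : ℝ) - 1) * μ := by
        rw [Finset.sum_const, nsmul_eq_mul, Finset.card_erase_of_mem (Finset.mem_univ k),
          Finset.card_univ, Nat.cast_pred Fintype.card_pos]

theorem abs_gram_eigenvalues_sub_one_le {n p : ℕ} {X : Matrix (Fin n) (Fin p) ℝ} {μ : ℝ}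
    (hcols : ∀ j, ∑ i, (X i j) ^ 2 = 1) (hcoh : ∀ k l, k ≠ l → |∑ i, X i k * X i l| ≤ μ)
    (T : Finset (Fin p)) (i : {j // j ∈ T}) :
    |(gram_isHermitian X T).eigenvalues i - 1| ≤ ((T.card : ℝ) - 1) * μ := by
  rw [← Fintype.card_coe T]
  refine (gram_isHermitian X T).abs_eigenvalues_sub_le (fun k => ?_) (fun k l hkl => ?_) i
  · simpa [gram_apply, sq] using hcols k
  · simpa [gram_apply] using hcoh k l (Subtype.coe_ne_coe.mpr hkl)

theorem mul_sqrt_mul_le_quarter_div {S μ η t : ℝ} (hS : 0 ≤ S) (hμ : 0 ≤ μ) (ht : 1 < t)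
    (htη : t < 2 - η) :
    S * √S * μ ≤
      1 / 4 * ((S ^ 3 * μ ^ 2 * (2 - η) ^ 2 + 4 * (S * √S) * μ * (2 - η) ^ 2) / (t - 1)) := by
  have hx : 0 ≤ S * √S * μ := by positivity
  have hta : t - 1 ≤ (2 - η) ^ 2 := by nlinarith
  rw [← mul_div_assoc, le_div_iff₀ (by linarith)]
  have hfirst : 0 ≤ S ^ 3 * μ ^ 2 * (2 - η) ^ 2 := by positivity
  nlinarith [mul_le_mul_of_nonneg_left hta hx]

theorem successive_perturbation_general
    {n p : ℕ} (X : Matrix (Fin n) (Fin p) ℝ) (μ : ℝ) (s₀ s₁ : ℕ)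
    (hcols : ∀ j, ∑ i, (X i j) ^ 2 = 1)
    (hμ0 : 0 ≤ μ)
    (hcoh : ∀ k l, k ≠ l → |∑ i, X i k * X i l| ≤ μ)
    (T₀ T₁ : Finset (Fin p)) (hT₀ : T₀.card = s₀) (hT₁ : T₁.card = s₁)
    (tlam1 tlams η : ℝ)
    (hup : ∀ i, (gram_isHermitian X T₀).eigenvalues i ≤ tlam1)
    (εmin εmax : ℝ)
    (hεmax : εmax = (1 / 4) * ((((s₀ : ℝ) + s₁) ^ 3 * μ ^ 2 * (2 - η) ^ 2 +
        4 * (((s₀ : ℝ) + s₁) * Real.sqrt ((s₀ : ℝ) + s₁)) * μ * (2 - η) ^ 2) / (tlam1 - 1)))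
    (h1a : tlams < 1 - ((s₀ : ℝ) + s₁) * μ) (h1b : η < tlams)
    (h2a : 1 < tlam1) (h2b : tlam1 < 2 - η)
    (h3 : (s₁ : ℝ) < min ((tlams - η) / εmin) ((2 - η - tlam1) / εmax)) :
    ∀ i, tlams - (s₁ : ℝ) * εmin ≤ (gram_isHermitian X (T₀ ∪ T₁)).eigenvalues i ∧
      (gram_isHermitian X (T₀ ∪ T₁)).eigenvalues i ≤ tlam1 + (s₁ : ℝ) * εmax := by
  intro i
  have hcard : ((T₀ ∪ T₁).card : ℝ) ≤ s₀ + s₁ := by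
    rw [← hT₀, ← hT₁]; exact_mod_cast Finset.card_union_le T₀ T₁
  set S : ℝ := (s₀ : ℝ) + s₁
  have hεmin : 0 ≤ εmin := by
    by_contra! h
    have := (Nat.cast_nonneg s₁).trans_lt (h3.trans_le (min_le_left _ _))
    exact (div_neg_of_pos_of_neg (sub_pos.mpr h1b) h).not_gt this
  have hgersh := abs_le.mp (abs_gram_eigenvalues_sub_one_le hcols hcoh (T₀ ∪ T₁) i)
  have hSμ : ((T₀ ∪ T₁).card - 1 : ℝ) * μ ≤ S * μ := by gcongr; linarith
  refine ⟨by linarith [mul_nonneg (Nat.cast_nonneg s₁) hεmin], ?_⟩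
  rcases Nat.eq_zero_or_pos s₁ with rfl | hs₁
  · obtain rfl : T₁ = ∅ := Finset.card_eq_zero.mp hT₁
    clear hgersh hSμ
    revert i
    rw [Finset.union_empty]
    simpa using hup
  have hS : 1 ≤ S := by simp only [S]; norm_cast; omega
  have hSsqrt : S * μ ≤ S * √S * μ := by
    gcongr; exact le_mul_of_one_le_right (by linarith) (Real.one_le_sqrt.mpr hS)
  have hεmax' : S * √S * μ ≤ εmax :=
    hεmax ▸ mul_sqrt_mul_le_quarter_div (by positivity) hμ0 h2a h2b
  have hεmax_nonneg : 0 ≤ εmax := (by positivity : 0 ≤ S * √S * μ).trans hεmax'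
  have : εmax ≤ s₁ * εmax := le_mul_of_one_le_left hεmax_nonneg (by exact_mod_cast hs₁)
  linarith

/-- **Successive perturbations: appending `s₁` columns.**
If all eigenvalues of `X_{T₀}ᵗX_{T₀}` lie between `λ̃_{s₀}` and `λ̃₁`, and the assumptions
(1)–(3) hold, then the smallest eigenvalue of `X_{T₀∪T₁}ᵗX_{T₀∪T₁}` is at least
`λ̃_{s₀} − s₁ ε_min` and its largest eigenvalue is at most `λ̃₁ + s₁ ε_max`. -/
theorem successive_perturbation
    {n p : ℕ} (X : Matrix (Fin n) (Fin p) ℝ) (μ : ℝ) (s₀ s₁ : ℕ)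
    (hcols : ∀ j, ∑ i, (X i j) ^ 2 = 1)
    (hμ0 : 0 ≤ μ)
    (hcoh : ∀ k l, k ≠ l → |∑ i, X i k * X i l| ≤ μ)
    (T₀ T₁ : Finset (Fin p)) (hT₀ : T₀.card = s₀) (hT₁ : T₁.card = s₁)
    (hdisj : Disjoint T₀ T₁)
    (tlam1 tlams η : ℝ)
    (hη0 : 0 < η) (hη1 : η < 1)
    (hup : ∀ i, (gram_isHermitian X T₀).eigenvalues i ≤ tlam1)
    (hdown : ∀ i, tlams ≤ (gram_isHermitian X T₀).eigenvalues i)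
    (htpos : 0 < tlams)
    (εmin εmax : ℝ)
    (hεmin : εmin = (1 / 4) * (((s₀ : ℝ) ^ 3 * μ ^ 2 * η ^ 2 +
        4 * ((s₀ : ℝ) * Real.sqrt s₀) * μ * η ^ 2) / (1 - (s₀ : ℝ) * μ ^ 2 - η)))
    (hεmax : εmax = (1 / 4) * ((((s₀ : ℝ) + s₁) ^ 3 * μ ^ 2 * (2 - η) ^ 2 +
        4 * (((s₀ : ℝ) + s₁) * Real.sqrt ((s₀ : ℝ) + s₁)) * μ * (2 - η) ^ 2) / (tlam1 - 1)))
    (h1a : tlams < 1 - ((s₀ : ℝ) + s₁) * μ) (h1b : η < tlams)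
    (h2a : 1 < tlam1) (h2b : tlam1 < 2 - η)
    (h3 : (s₁ : ℝ) < min ((tlams - η) / εmin) ((2 - η - tlam1) / εmax)) :
    ∀ i, tlams - (s₁ : ℝ) * εmin ≤ (gram_isHermitian X (T₀ ∪ T₁)).eigenvalues i ∧
      (gram_isHermitian X (T₀ ∪ T₁)).eigenvalues i ≤ tlam1 + (s₁ : ℝ) * εmax :=
  successive_perturbation_general X μ s₀ s₁ hcols hμ0 hcoh T₀ T₁ hT₀ hT₁ tlam1 tlams η hup εmin εmax
    hεmax h1a h1b h2a h2b h3
end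

section
/- Let X ∈ ℝ^{n×p} and let T, T' ⊆ {1,…,p} be disjoint subsets with |T| = 2·s₀ and |T'| = 2·s₀. Suppose that every eigenvalue of X_{T∪T'}ᵗX_{T∪T'} lies in the interval [a, b] with 0 ≤ a ≤ b. Then for all vectors g, h ∈ ℝ^p, |⟨X_T g_T, X_{T'} h_{T'}⟩| ≤ ((b − a)/2)·‖g_T‖₂·‖h_{T'}‖₂. In particular, under the hypotheses of the 4s₀-column eigenvalue corollary with lower bound a = λ_{s₀} − 3·s₀·ε_min and upper bound b = λ₁ + 3·s₀·ε_max, one gets |⟨X_T g_T, X_{T'} h_{T'}⟩| ≤ (λ₁ − λ_{s₀} + 3·s₀·(ε_max + ε_min))·‖g_T‖₂·‖h_{T'}‖₂. -/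
/-!
On `S = T ∪ T'` the eigenvalue bounds say `a ‖w‖² ≤ ‖X_S w‖² ≤ b ‖w‖²`, i.e. `X_S` is an
approximate isometry. For unit vectors `x, y` with disjoint supports, `x + y` and `x - y` both have
squared norm `2`, so the parallelogram law `4 ⟪X_S x, X_S y⟫ = ‖X_S (x + y)‖² - ‖X_S (x - y)‖²`
bounds `|⟪X_S x, X_S y⟫|` by `(2b - 2a) / 4`; homogeneity gives the general case.
-/

open Matrix

open scoped MatrixOrder RealInnerProductSpace
open WithLp (toLp)

namespace Matrix.IsHermitian

variable {𝕜 m : Type*} [RCLike 𝕜] [Fintype m] [DecidableEq m] {A : Matrix m m 𝕜}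

theorem le_algebraMap_of_eigenvalues_le (hA : A.IsHermitian) {b : ℝ}
    (h : ∀ i, hA.eigenvalues i ≤ b) : A ≤ algebraMap ℝ _ b :=
  le_algebraMap_of_spectrum_le (by simpa [hA.spectrum_real_eq_range_eigenvalues])
    hA.isSelfAdjoint

theorem algebraMap_le_of_le_eigenvalues (hA : A.IsHermitian) {a : ℝ}
    (h : ∀ i, a ≤ hA.eigenvalues i) : algebraMap ℝ _ a ≤ A :=
  algebraMap_le_of_le_spectrum (by simpa [hA.spectrum_real_eq_range_eigenvalues])
    hA.isSelfAdjoint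

end Matrix.IsHermitian

theorem EuclideanSpace.norm_sq_eq_dotProduct {k : Type*} [Fintype k] (w : EuclideanSpace ℝ k) :
    ‖w‖ ^ 2 = w.ofLp ⬝ᵥ w.ofLp := by
  rw [← real_inner_self_eq_norm_sq, EuclideanSpace.inner_eq_star_dotProduct]
  simp

namespace Matrix

variable {m k : Type*} [Fintype m] [Fintype k] [DecidableEq k] (M : Matrix m k ℝ)

theorem norm_toEuclideanLin_sq (w : EuclideanSpace ℝ k) :
    ‖toEuclideanLin M w‖ ^ 2 = w.ofLp ⬝ᵥ (Mᴴ * M) *ᵥ w.ofLp := by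
  rw [← real_inner_self_eq_norm_sq, EuclideanSpace.inner_eq_star_dotProduct, toLpLin_apply]
  simp [← mulVec_mulVec, dotProduct_mulVec, vecMul_transpose, dotProduct_comm]

variable {M}

theorem norm_toEuclideanLin_sq_le {b : ℝ} (h : Mᴴ * M ≤ algebraMap ℝ _ b)
    (w : EuclideanSpace ℝ k) : ‖toEuclideanLin M w‖ ^ 2 ≤ b * ‖w‖ ^ 2 := by
  have := (Matrix.le_iff.mp h).dotProduct_mulVec_nonneg w.ofLp
  rw [norm_toEuclideanLin_sq, EuclideanSpace.norm_sq_eq_dotProduct]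
  simpa [sub_mulVec, Algebra.algebraMap_eq_smul_one, smul_mulVec, dotProduct_smul] using this

theorem le_norm_toEuclideanLin_sq {a : ℝ} (h : algebraMap ℝ _ a ≤ Mᴴ * M)
    (w : EuclideanSpace ℝ k) : a * ‖w‖ ^ 2 ≤ ‖toEuclideanLin M w‖ ^ 2 := by
  have := (Matrix.le_iff.mp h).dotProduct_mulVec_nonneg w.ofLp
  rw [norm_toEuclideanLin_sq, EuclideanSpace.norm_sq_eq_dotProduct]
  simpa [sub_mulVec, Algebra.algebraMap_eq_smul_one, smul_mulVec, dotProduct_smul] using this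

end Matrix

section ParallelogramBound

variable {E F : Type*} [NormedAddCommGroup E] [InnerProductSpace ℝ E]
  [NormedAddCommGroup F] [InnerProductSpace ℝ F] (L : E →ₗ[ℝ] F) {a b : ℝ}
  (hlow : ∀ w, a * ‖w‖ ^ 2 ≤ ‖L w‖ ^ 2) (hup : ∀ w, ‖L w‖ ^ 2 ≤ b * ‖w‖ ^ 2)
include hlow hup

theorem abs_inner_map_le_sq_add_sq_of_inner_eq_zero {x y : E} (hxy : ⟪x, y⟫ = 0) :
    |⟪L x, L y⟫| ≤ (b - a) / 4 * (‖x‖ ^ 2 + ‖y‖ ^ 2) := by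
  have hpolar : 4 * ⟪L x, L y⟫ = ‖L (x + y)‖ ^ 2 - ‖L (x - y)‖ ^ 2 := by
    rw [map_add, map_sub, norm_add_sq_real, norm_sub_sq_real]; ring
  have hadd : ‖x + y‖ ^ 2 = ‖x‖ ^ 2 + ‖y‖ ^ 2 := by rw [norm_add_sq_real, hxy]; ring
  have hsub : ‖x - y‖ ^ 2 = ‖x‖ ^ 2 + ‖y‖ ^ 2 := by rw [norm_sub_sq_real, hxy]; ring
  have hadd_ge := hlow (x + y)
  have hadd_le := hup (x + y)
  have hsub_ge := hlow (x - y)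
  have hsub_le := hup (x - y)
  rw [hadd] at hadd_ge hadd_le
  rw [hsub] at hsub_ge hsub_le
  rw [abs_le]
  constructor <;> linarith

theorem abs_inner_map_le_of_inner_eq_zero {x y : E} (hxy : ⟪x, y⟫ = 0) :
    |⟪L x, L y⟫| ≤ (b - a) / 2 * ‖x‖ * ‖y‖ := by
  rcases eq_or_ne x 0 with rfl | hx
  · simp
  rcases eq_or_ne y 0 with rfl | hy
  · simp
  have hx1 : ‖‖x‖⁻¹ • x‖ = 1 := by simpa using norm_smul_inv_norm (𝕜 := ℝ) hx
  have hy1 : ‖‖y‖⁻¹ • y‖ = 1 := by simpa using norm_smul_inv_norm (𝕜 := ℝ) hy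
  have hunit := abs_inner_map_le_sq_add_sq_of_inner_eq_zero L hlow hup (x := ‖x‖⁻¹ • x)
    (y := ‖y‖⁻¹ • y) (by simp [real_inner_smul_left, real_inner_smul_right, hxy])
  rw [map_smul, map_smul, real_inner_smul_left, real_inner_smul_right, hx1, hy1, abs_mul,
    abs_mul, abs_inv, abs_inv, abs_norm, abs_norm, inv_mul_le_iff₀ (norm_pos_iff.mpr hx),
    inv_mul_le_iff₀ (norm_pos_iff.mpr hy)] at hunit
  linarith

end ParallelogramBound

section Restriction

variable {ι : Type*} [DecidableEq ι] {S T T' : Finset ι}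

theorem Finset.sum_coe_sort_ite_mem {M : Type*} [AddCommMonoid M] (hT : T ⊆ S) (f : ι → M) :
    ∑ j : S, (if (j : ι) ∈ T then f j else (0 : M)) = ∑ j ∈ T, f j := by
  rw [Finset.sum_coe_sort S fun j => if j ∈ T then f j else 0, Finset.sum_ite_mem,
    Finset.inter_eq_right.mpr hT]

variable (S) in
/-- The paper's `g_T`, as a vector of `ℝ^S` vanishing off `T`. -/
def restrictTo (T : Finset ι) (g : ι → ℝ) : EuclideanSpace ℝ S :=
  toLp 2 fun j => if (j : ι) ∈ T then g j else 0

theorem norm_restrictTo (hT : T ⊆ S) (g : ι → ℝ) :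
    ‖restrictTo S T g‖ = √(∑ j ∈ T, g j ^ 2) := by
  rw [EuclideanSpace.norm_eq]
  congr 1
  simp only [restrictTo, PiLp.toLp_apply, Real.norm_eq_abs, sq_abs, ite_pow, ne_eq,
    OfNat.ofNat_ne_zero, not_false_eq_true, zero_pow]
  exact Finset.sum_coe_sort_ite_mem hT fun j => g j ^ 2

theorem inner_restrictTo_eq_zero (hTT' : Disjoint T T') (g h : ι → ℝ) :
    ⟪restrictTo S T g, restrictTo S T' h⟫ = 0 := by
  refine Finset.sum_eq_zero fun j _ => ?_
  by_cases hj : (j : ι) ∈ T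
  · simp [restrictTo, hj, Finset.disjoint_left.mp hTT' hj]
  · simp [restrictTo, hj]

end Restriction

theorem toEuclideanLin_subCols_restrictTo {n p : ℕ} (X : Matrix (Fin n) (Fin p) ℝ)
    {S T : Finset (Fin p)} (hT : T ⊆ S) (g : Fin p → ℝ) (i : Fin n) :
    toEuclideanLin (subCols X S) (restrictTo S T g) i = ∑ j ∈ T, g j * X i j := by
  simp only [restrictTo, toLpLin_apply, PiLp.toLp_apply, mulVec, dotProduct, subCols,
    submatrix_apply, id_eq, mul_ite, mul_zero]
  rw [Finset.sum_coe_sort_ite_mem hT fun j => X i j * g j]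
  simp only [mul_comm]

theorem scalar_product_bound_general
    {n p : ℕ} (X : Matrix (Fin n) (Fin p) ℝ)
    (T T' : Finset (Fin p)) (hdisj : Disjoint T T')
    (a b : ℝ)
    (heig : ∀ i, a ≤ (gram_isHermitian X (T ∪ T')).eigenvalues i ∧
      (gram_isHermitian X (T ∪ T')).eigenvalues i ≤ b) :
    ∀ g h : Fin p → ℝ,
      |∑ i, (∑ j ∈ T, g j * X i j) * (∑ j ∈ T', h j * X i j)| ≤
        ((b - a) / 2) * Real.sqrt (∑ j ∈ T, g j ^ 2) * Real.sqrt (∑ j ∈ T', h j ^ 2) := by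
  intro g h
  have hS := gram_isHermitian X (T ∪ T')
  have key := abs_inner_map_le_of_inner_eq_zero (toEuclideanLin (subCols X (T ∪ T')))
    (le_norm_toEuclideanLin_sq (hS.algebraMap_le_of_le_eigenvalues fun i => (heig i).1))
    (norm_toEuclideanLin_sq_le (hS.le_algebraMap_of_eigenvalues_le fun i => (heig i).2))
    (inner_restrictTo_eq_zero hdisj g h)
  rw [norm_restrictTo Finset.subset_union_left, norm_restrictTo Finset.subset_union_right] at key
  convert key using 2
  simp only [PiLp.inner_apply, toEuclideanLin_subCols_restrictTo X Finset.subset_union_left,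
    toEuclideanLin_subCols_restrictTo X Finset.subset_union_right, RCLike.inner_apply, conj_trivial,
    mul_comm]

/-- **Bounding scalar products via the parallelogram law.**
If `T` and `T'` are disjoint subsets of cardinality `2 s₀` and all eigenvalues of
`X_{T∪T'}ᵗX_{T∪T'}` lie in `[a, b]` with `0 ≤ a ≤ b`, then for all `g, h ∈ ℝᵖ`,
`|⟨X_T g_T, X_{T'} h_{T'}⟩| ≤ ((b − a)/2) ‖g_T‖₂ ‖h_{T'}‖₂`. -/
theorem scalar_product_bound
    {n p : ℕ} (X : Matrix (Fin n) (Fin p) ℝ) (s₀ : ℕ)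
    (T T' : Finset (Fin p)) (hdisj : Disjoint T T')
    (hT : T.card = 2 * s₀) (hT' : T'.card = 2 * s₀)
    (a b : ℝ) (ha : 0 ≤ a) (hab : a ≤ b)
    (heig : ∀ i, a ≤ (gram_isHermitian X (T ∪ T')).eigenvalues i ∧
      (gram_isHermitian X (T ∪ T')).eigenvalues i ≤ b) :
    ∀ g h : Fin p → ℝ,
      |∑ i, (∑ j ∈ T, g j * X i j) * (∑ j ∈ T', h j * X i j)| ≤
        ((b - a) / 2) * Real.sqrt (∑ j ∈ T, g j ^ 2) * Real.sqrt (∑ j ∈ T', h j ^ 2) :=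
  scalar_product_bound_general X T T' hdisj a b heig
end

section
/- Let h ∈ ℝ^p, let T₀ ⊆ {1,…,p} with |T₀| = s₀ ≥ 1, and let T₁, T₂, …, T_J be the partition of T₀ᶜ obtained by taking T₁ as the indices of the s₀ largest entries of h on T₀ᶜ in absolute value, T₂ as the indices of the s₀ largest entries of h on (T₀∪T₁)ᶜ in absolute value, and so on (the last block possibly having fewer than s₀ elements). Then Σ_{j=2}^{J} ‖h_{T_j}‖₂ ≤ ‖h_{T₀ᶜ}‖₁ / √s₀. -/
/-!
Every entry of a block `T (j+1)` is bounded in absolute value by the mean of `|h|` over the full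
block `T j` before it, so `‖h_{T (j+1)}‖₂ ≤ √s₀ · ‖h_{T j}‖₁ / s₀ = ‖h_{T j}‖₁ / √s₀`. Summing over
`j` and dropping the last block's contribution on the right gives `‖h_{T₀ᶜ}‖₁ / √s₀`.
-/

open Finset

theorem sqrt_sum_sq_le_sum_abs_div_sqrt_card {ι : Type*} (f : ι → ℝ) {A B : Finset ι}
    (hcard : #B ≤ #A) (hdom : ∀ a ∈ A, ∀ b ∈ B, |f b| ≤ |f a|) :
    √(∑ i ∈ B, f i ^ 2) ≤ (∑ i ∈ A, |f i|) / √(#A : ℝ) := by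
  set mean := (∑ i ∈ A, |f i|) / #A
  have hmean : 0 ≤ mean := by positivity
  have hle_mean : ∀ b ∈ B, |f b| ≤ mean := by
    intro b hb
    have hA : (0 : ℝ) < #A := by exact_mod_cast (card_pos.mpr ⟨b, hb⟩).trans_le hcard
    rw [le_div_iff₀ hA, mul_comm, ← nsmul_eq_mul, ← sum_const]
    exact sum_le_sum fun a ha => hdom a ha b hb
  calc √(∑ i ∈ B, f i ^ 2) ≤ √(#A * mean ^ 2) := by
        gcongr
        calc ∑ i ∈ B, f i ^ 2 ≤ ∑ _i ∈ B, mean ^ 2 :=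
              sum_le_sum fun i hi => by rw [← sq_abs]; gcongr; exact hle_mean i hi
          _ = #B * mean ^ 2 := by rw [sum_const, nsmul_eq_mul]
          _ ≤ #A * mean ^ 2 := by gcongr
    _ = √(#A : ℝ) * mean := by rw [Real.sqrt_mul (Nat.cast_nonneg _), Real.sqrt_sq hmean]
    _ = (∑ i ∈ A, |f i|) / √(#A : ℝ) := by
        rw [mul_div_left_comm, Real.sqrt_div_self', one_div, div_eq_mul_inv]

theorem Fin.sum_filter_one_le_eq_sum_succ {M : Type*} [AddCommMonoid M] {n : ℕ}
    [DecidablePred fun j : Fin (n + 1) => 1 ≤ (j : ℕ)] (F : Fin (n + 1) → M) :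
    ∑ j ∈ univ.filter (fun j : Fin (n + 1) => 1 ≤ (j : ℕ)), F j = ∑ k : Fin n, F k.succ := by
  rw [sum_filter, Fin.sum_univ_succ]
  simp

theorem shelling_lemma_general
    {p : ℕ} (h : Fin p → ℝ) (s₀ : ℕ)
    (T₀ : Finset (Fin p))
    (J : ℕ) (T : Fin J → Finset (Fin p))
    (hdisj : ∀ i j : Fin J, i ≠ j → Disjoint (T i) (T j))
    (hunion : Finset.univ.biUnion T = T₀ᶜ)
    (hfull : ∀ j : Fin J, (j : ℕ) < J - 1 → (T j).card = s₀)
    (hsize : ∀ j : Fin J, (T j).card ≤ s₀)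
    (horder : ∀ i j : Fin J, i < j → ∀ a ∈ T i, ∀ b ∈ T j, |h b| ≤ |h a|) :
    ∑ j ∈ Finset.univ.filter (fun j : Fin J => 1 ≤ (j : ℕ)),
        Real.sqrt (∑ i ∈ T j, h i ^ 2) ≤
      (∑ i ∈ T₀ᶜ, |h i|) / Real.sqrt s₀ := by
  obtain _ | n := J
  · rw [univ_eq_empty, filter_empty, sum_empty]
    positivity
  have hblock (k : Fin n) :
      √(∑ i ∈ T k.succ, h i ^ 2) ≤ (∑ i ∈ T k.castSucc, |h i|) / √(s₀ : ℝ) := by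
    have hcard : #(T k.castSucc) = s₀ := hfull _ (by simp)
    rw [← hcard]
    exact sqrt_sum_sq_le_sum_abs_div_sqrt_card h (hcard ▸ hsize k.succ)
      (horder _ _ Fin.castSucc_lt_succ)
  rw [Fin.sum_filter_one_le_eq_sum_succ, ← hunion,
    sum_biUnion fun i _ j _ hij => hdisj i j hij, Fin.sum_univ_castSucc, add_div, sum_div]
  exact le_add_of_le_of_nonneg (sum_le_sum fun k _ => hblock k) (by positivity)

/-- **The shelling lemma.** Let `T 0, T 1, …, T (J-1)` (corresponding to `T₁, …, T_J` in the
usual notation) be the partition of `T₀ᶜ` obtained by greedily grouping the entries of `h`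
outside `T₀` into blocks of size `s₀` in decreasing order of absolute value: the blocks are
pairwise disjoint, their union is `T₀ᶜ`, all blocks but possibly the last one have exactly
`s₀` elements (every block has at most `s₀`), and every entry of a later block is, in absolute
value, at most every entry of an earlier block. Then
`Σ_{j=2}^{J} ‖h_{T_j}‖₂ ≤ ‖h_{T₀ᶜ}‖₁ / √s₀`. -/
theorem shelling_lemma
    {p : ℕ} (h : Fin p → ℝ) (s₀ : ℕ) (hs₀ : 1 ≤ s₀)
    (T₀ : Finset (Fin p)) (hT₀ : T₀.card = s₀)
    (J : ℕ) (hJ : 1 ≤ J) (T : Fin J → Finset (Fin p))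
    (hdisj : ∀ i j : Fin J, i ≠ j → Disjoint (T i) (T j))
    (hunion : Finset.univ.biUnion T = T₀ᶜ)
    (hfull : ∀ j : Fin J, (j : ℕ) < J - 1 → (T j).card = s₀)
    (hsize : ∀ j : Fin J, (T j).card ≤ s₀)
    (horder : ∀ i j : Fin J, i < j → ∀ a ∈ T i, ∀ b ∈ T j, |h b| ≤ |h a|) :
    ∑ j ∈ Finset.univ.filter (fun j : Fin J => 1 ≤ (j : ℕ)),
        Real.sqrt (∑ i ∈ T j, h i ^ 2) ≤
      (∑ i ∈ T₀ᶜ, |h i|) / Real.sqrt s₀ :=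
  shelling_lemma_general h s₀ T₀ J T hdisj hunion hfull hsize horder
end
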